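/- Let T > 0 and K > 0, and for t ∈ [0,T) and x > 0 set G(t,x) := (1/(x √(2π(T−t)))) · exp(−(log(x/K) + (T−t)/2)² / (2(T−t))) (the second derivative ∂²F/∂x² of the Black–Scholes call price function). Then there exists a constant C > 0, depending only on T and K, such that for all t ∈ [0,T): ∫_ℝ e^{4(√t w − t/2)} · G(t, e^{√t w − t/2})² · (2π)^{−1/2} e^{−w²/2} dw ≤ C (T − t)^{−1/2}. In other words, writing X_t := e^{W_t − t/2} for a one-dimensional Brownian motion W, one has E[(X_t² ∂²F/∂x²(t, X_t))²] ≤ C (T−t)^{−1/2}, i.e. in condition (3.2) one may choose θ = 1/4 for the European call pay-off. -/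

import Mathlib

open MeasureTheory Real

/-- The Black–Scholes gamma `G(t,x) = ∂²F/∂x²(t,x)` of the call price function:
`G(t,x) = (1/(x √(2π(T-t)))) exp(-(log(x/K) + (T-t)/2)²/(2(T-t)))`. -/
noncomputable def bsGamma (T K t x : ℝ) : ℝ :=
  (1 / (x * Real.sqrt (2 * Real.pi * (T - t)))) *
    Real.exp (-(Real.log (x / K) + (T - t) / 2) ^ 2 / (2 * (T - t)))

/-!
Put `s = T - t`, `y = √t w - t/2` and `u = y - log K + s/2`. Then `e^{4y} G(t, e^y)²` equals
`e^{2y - u²/s} / (2πs)`, and the AM–GM bound `2u ≤ u²/(2s) + 2s` trades the growing factor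
`e^{2y}` for half of the Gaussian decay in `u`: with `c = s/2 - t/2 - log K`, the integrand is at
most `K² e^T / (2πs) · exp(-(√t w + c)²/(2s))` times the standard Gaussian density. Completing
the square in `w`, the product of the two Gaussians is dominated by a Gaussian of variance
`s / (t + s) = s / T`, so its integral is at most `√(s/T)`, which gives the rate `(T - t)^{-1/2}`.
-/

lemma integral_exp_neg_mul_sq_add (b m : ℝ) :
    ∫ x : ℝ, exp (-b * (x + m) ^ 2) = √(π / b) := by
  rw [integral_add_right_eq_self (fun x : ℝ => exp (-b * x ^ 2)), integral_gaussian]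

lemma exp_neg_sq_div_mul_exp_neg_sq_le {s : ℝ} (hs : 0 < s) (σ c w : ℝ) :
    exp (-(σ * w + c) ^ 2 / (2 * s)) * exp (-w ^ 2 / 2) ≤
      exp (-((σ ^ 2 + s) / (2 * s)) * (w + σ * c / (σ ^ 2 + s)) ^ 2) := by
  have hT : 0 < σ ^ 2 + s := by positivity
  rw [← exp_add, exp_le_exp]
  have hsq : -(σ * w + c) ^ 2 / (2 * s) + -w ^ 2 / 2 =
      -((σ ^ 2 + s) / (2 * s)) * (w + σ * c / (σ ^ 2 + s)) ^ 2 - c ^ 2 / (2 * (σ ^ 2 + s)) := by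
    field_simp
    ring
  have hrem : 0 ≤ c ^ 2 / (2 * (σ ^ 2 + s)) := by positivity
  linarith

lemma integrable_exp_neg_sq_div_mul_gaussian (σ c : ℝ) {s : ℝ} (hs : 0 ≤ s) :
    Integrable fun w : ℝ =>
      exp (-(σ * w + c) ^ 2 / (2 * s)) * (exp (-w ^ 2 / 2) / √(2 * π)) := by
  have hφ : Integrable fun w : ℝ => exp (-w ^ 2 / 2) / √(2 * π) := by
    simpa [neg_div, div_eq_inv_mul, mul_comm, mul_assoc] using
      (integrable_exp_neg_mul_sq (b := 1 / 2) (by norm_num)).div_const √(2 * π)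
  refine hφ.mono' (by fun_prop) (ae_of_all _ fun w => ?_)
  rw [norm_mul, norm_of_nonneg (exp_nonneg _), norm_of_nonneg (by positivity)]
  refine mul_le_of_le_one_left (by positivity) (exp_le_one_iff.mpr ?_)
  exact div_nonpos_of_nonpos_of_nonneg (neg_nonpos.mpr (sq_nonneg _)) (by positivity)

lemma integral_exp_neg_sq_div_mul_gaussian_le (σ c : ℝ) {s : ℝ} (hs : 0 < s) :
    ∫ w : ℝ, exp (-(σ * w + c) ^ 2 / (2 * s)) * (exp (-w ^ 2 / 2) / √(2 * π)) ≤
      √(s / (σ ^ 2 + s)) := by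
  have hb : 0 < (σ ^ 2 + s) / (2 * s) := by positivity
  calc _ ≤ ∫ w : ℝ,
        exp (-((σ ^ 2 + s) / (2 * s)) * (w + σ * c / (σ ^ 2 + s)) ^ 2) / √(2 * π) := by
        refine integral_mono (integrable_exp_neg_sq_div_mul_gaussian σ c hs.le)
          (((integrable_exp_neg_mul_sq hb).comp_add_right _).div_const _) fun w => ?_
        rw [← mul_div_assoc]
        gcongr
        exact exp_neg_sq_div_mul_exp_neg_sq_le hs σ c w
    _ = √(π / ((σ ^ 2 + s) / (2 * s))) / √(2 * π) := by
        rw [integral_div, integral_exp_neg_mul_sq_add]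
    _ = √(s / (σ ^ 2 + s)) := by
        rw [← sqrt_div' _ (by positivity)]
        congr 1
        field_simp

lemma exp_four_mul_mul_bsGamma_sq {T K t : ℝ} (hK : K ≠ 0) (htT : t ≤ T) (y : ℝ) :
    exp (4 * y) * bsGamma T K t (exp y) ^ 2 =
      exp (2 * y - (y - log K + (T - t) / 2) ^ 2 / (T - t)) / (2 * π * (T - t)) := by
  have hs : 0 ≤ 2 * π * (T - t) := mul_nonneg (by positivity) (sub_nonneg.mpr htT)
  simp only [bsGamma, log_div (exp_ne_zero y) hK, log_exp]
  rw [mul_pow, div_pow, mul_pow, sq_sqrt hs, ← exp_nat_mul, ← exp_nat_mul]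
  generalize T - t = s at hs ⊢
  rw [show 2 * y - (y - log K + s / 2) ^ 2 / s =
      4 * y + 2 * (-(y - log K + s / 2) ^ 2 / (2 * s)) - 2 * y by ring,
    exp_sub, exp_add]
  push_cast
  field_simp

lemma exp_four_mul_mul_bsGamma_sq_le {T K t : ℝ} (hK : K ≠ 0) (ht : 0 ≤ t) (htT : t < T)
    (y : ℝ) :
    exp (4 * y) * bsGamma T K t (exp y) ^ 2 ≤
      K ^ 2 * exp T / (2 * π * (T - t)) *
        exp (-(y - log K + (T - t) / 2) ^ 2 / (2 * (T - t))) := by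
  rw [exp_four_mul_mul_bsGamma_sq hK htT.le, div_mul_eq_mul_div]
  gcongr
  rw [← sq_abs K, ← exp_log_eq_abs hK, ← exp_nat_mul, ← exp_add, ← exp_add, exp_le_exp]
  have hs : 0 < T - t := sub_pos.mpr htT
  have hsT : T - t ≤ T := by linarith
  generalize T - t = s at hs hsT ⊢
  set u := y - log K + s / 2 with hu
  have hamgm : 2 * u - u ^ 2 / (2 * s) ≤ 2 * s := by
    have hsq : (u - 2 * s) ^ 2 / (2 * s) = u ^ 2 / (2 * s) - 2 * u + 2 * s := by
      field_simp
      ring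
    linarith [show 0 ≤ (u - 2 * s) ^ 2 / (2 * s) by positivity]
  have hdouble : u ^ 2 / s = 2 * (u ^ 2 / (2 * s)) := by field_simp
  rw [neg_div]
  push_cast
  linarith

/-- There is a constant `C > 0`, depending only on `T` and `K`, such that for all
`t ∈ [0,T)`, writing `X_t = e^{√t w - t/2}` with `w` standard normal,
`E[(X_t² ∂²F/∂x²(t,X_t))²] ≤ C (T-t)^{-1/2}`; i.e. in condition (3.2) one can
choose `θ = 1/4` for the European call pay-off. -/
theorem stmt8 (T K : ℝ) (hT : 0 < T) (hK : 0 < K) :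
    ∃ C > 0, ∀ t ∈ Set.Ico 0 T,
      (∫ w : ℝ, Real.exp (4 * (Real.sqrt t * w - t / 2)) *
          (bsGamma T K t (Real.exp (Real.sqrt t * w - t / 2))) ^ 2 *
          (Real.exp (-w ^ 2 / 2) / Real.sqrt (2 * Real.pi)))
        ≤ C * (T - t) ^ (-(1 : ℝ) / 2) := by
  refine ⟨K ^ 2 * exp T / (2 * π * √T), by positivity, fun t ⟨ht, htT⟩ => ?_⟩
  have hs : 0 < T - t := sub_pos.mpr htT
  set B := K ^ 2 * exp T / (2 * π * (T - t)) with hB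
  set c := (T - t) / 2 - t / 2 - log K
  have hbound (w : ℝ) :
      exp (4 * (√t * w - t / 2)) * bsGamma T K t (exp (√t * w - t / 2)) ^ 2 *
          (exp (-w ^ 2 / 2) / √(2 * π)) ≤
        B * (exp (-(√t * w + c) ^ 2 / (2 * (T - t))) * (exp (-w ^ 2 / 2) / √(2 * π))) := by
    have h := exp_four_mul_mul_bsGamma_sq_le hK.ne' ht htT (√t * w - t / 2)
    rw [show √t * w - t / 2 - log K + (T - t) / 2 = √t * w + c by ring] at h
    rw [← mul_assoc]
    exact mul_le_mul_of_nonneg_right h (by positivity)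
  calc _ ≤ ∫ w : ℝ,
        B * (exp (-(√t * w + c) ^ 2 / (2 * (T - t))) * (exp (-w ^ 2 / 2) / √(2 * π))) :=
        integral_mono_of_nonneg (ae_of_all _ fun w => by positivity)
          ((integrable_exp_neg_sq_div_mul_gaussian _ _ hs.le).const_mul B) (ae_of_all _ hbound)
    _ = B * ∫ w : ℝ,
        exp (-(√t * w + c) ^ 2 / (2 * (T - t))) * (exp (-w ^ 2 / 2) / √(2 * π)) :=
        integral_const_mul _ _
    _ ≤ B * √((T - t) / T) := by
        gcongr
        simpa [sq_sqrt ht] using integral_exp_neg_sq_div_mul_gaussian_le (√t) c hs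
    _ = K ^ 2 * exp T / (2 * π * √T) * (T - t) ^ (-(1 : ℝ) / 2) := by
        rw [neg_div, rpow_neg hs.le, ← sqrt_eq_rpow, sqrt_div' _ hT.le]
        field_simp
        rw [sq_sqrt hs.le, hB]
        field_simp
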